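/- Let m > k > 0 be integers and let a ∈ (−k/m, 0) satisfy S(a,a) = 0. Then S(a,ξ) > 0 for every ξ ∈ (a, −a). -/

import Mathlib

/-- The polynomial S(a,ξ) = Σ_{j=0}^m [(−1)^j ξ^{2j}/(2j−1)]·
[C(m−1,j)(ma+k)a + C(m−1,j−1)(ka+m)], with C(m−1,j) = 0 for j < 0 or j ≥ m. -/
noncomputable def Spoly (m k : ℕ) (a ξ : ℝ) : ℝ :=
  ∑ j ∈ Finset.range (m + 1),
    ((-1 : ℝ) ^ j * ξ ^ (2 * j) / (2 * (j : ℝ) - 1)) *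
      ((Nat.choose (m - 1) j : ℝ) * ((m : ℝ) * a + (k : ℝ)) * a
        + (if j = 0 then 0 else (Nat.choose (m - 1) (j - 1) : ℝ))
            * ((k : ℝ) * a + (m : ℝ)))

/-! With `c j = (-1)^j * [C(m-1,j)(ma+k)a + C(m-1,j-1)(ka+m)]` we have
`S(a,x) = Σ c j x^(2j)/(2j-1)`, so the derivative of `S(a,x)/x` is `(Σ c j x^(2j))/x²`, and by the
binomial theorem `Σ c j x^(2j) = (1-x²)^(m-1) ((ma+k)a - (ka+m)x²)`. For `a ∈ (-k/m, 0)` this is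
negative on `(0,1)`, so `S(a,x)/x` decreases strictly there; as `S` is even in `x`, it vanishes at
`x = -a ∈ (0,1)`, whence `S(a,x) > 0` on `(0,-a)`. Evenness and `S(a,0) = -(ma+k)a > 0` do the
rest. -/

open Finset

lemma sum_range_neg_pow_mul_choose_add {R : Type*} [CommRing R] (n : ℕ) (y P Q : R) :
    ∑ j ∈ range (n + 2),
        (-y) ^ j * (n.choose j * P + (if j = 0 then 0 else (n.choose (j - 1) : R)) * Q)
      = (1 - y) ^ n * (P - Q * y) := by
  have binom : ∑ j ∈ range (n + 1), (-y) ^ j * n.choose j = (1 - y) ^ n := by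
    rw [sub_eq_neg_add, add_pow]
    simp
  have hP : ∑ j ∈ range (n + 2), (-y) ^ j * (n.choose j * P) = (1 - y) ^ n * P := by
    simp only [sum_range_succ _ (n + 1), Nat.choose_succ_self, ← mul_assoc, ← sum_mul, binom]
    simp
  have hQ : ∑ j ∈ range (n + 2),
      (-y) ^ j * ((if j = 0 then 0 else (n.choose (j - 1) : R)) * Q) = -y * (1 - y) ^ n * Q := by
    simp only [sum_range_succ' _ (n + 1), Nat.succ_ne_zero, if_false, if_true, Nat.add_sub_cancel,
      zero_mul, mul_zero, add_zero]
    simp only [pow_succ, mul_comm _ (-y), mul_assoc, ← mul_sum]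
    rw [← binom, sum_mul]
    simp only [mul_assoc]
  simp only [mul_add, sum_add_distrib, hP, hQ]
  ring

lemma hasDerivAt_sum_pow_div_two_mul_sub_one_div (s : Finset ℕ) (c : ℕ → ℝ) {x : ℝ}
    (hx : x ≠ 0) :
    HasDerivAt (fun x => (∑ j ∈ s, c j * x ^ (2 * j) / (2 * j - 1)) / x)
      ((∑ j ∈ s, c j * x ^ (2 * j)) / x ^ 2) x := by
  have hf : HasDerivAt (fun x => ∑ j ∈ s, c j * x ^ (2 * j) / (2 * j - 1))
      (∑ j ∈ s, c j * ((2 * j : ℕ) * x ^ (2 * j - 1)) / (2 * j - 1)) x :=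
    HasDerivAt.fun_sum fun j _ => ((hasDerivAt_pow (2 * j) x).const_mul (c j)).div_const _
  refine (hf.div (hasDerivAt_id' x) hx).congr_deriv ?_
  rw [mul_one, sum_mul, ← sum_sub_distrib]
  congr 1
  refine sum_congr rfl fun j _ => ?_
  rcases j with _ | j
  · simp [div_neg]
  · have hj : (2 * ((j + 1 : ℕ) : ℝ) - 1) ≠ 0 := by
      push_cast
      linarith [(j.cast_nonneg : (0 : ℝ) ≤ j)]
    rw [show 2 * (j + 1) - 1 = 2 * j + 1 by omega]
    field_simp
    push_cast
    ring

section

variable {m k : ℕ} {a : ℝ}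

lemma spoly_neg (x : ℝ) : Spoly m k a (-x) = Spoly m k a x := by
  simp only [Spoly, (even_two_mul _).neg_pow]

lemma spoly_zero : Spoly m k a 0 = -(((m : ℝ) * a + k) * a) := by
  simp [Spoly, sum_range_succ']

lemma hasDerivAt_spoly_div (hm : 0 < m) {x : ℝ} (hx : x ≠ 0) :
    HasDerivAt (fun x => Spoly m k a x / x)
      ((1 - x ^ 2) ^ (m - 1) * (((m : ℝ) * a + k) * a - ((k : ℝ) * a + m) * x ^ 2) / x ^ 2) x := by
  obtain ⟨n, rfl⟩ := Nat.exists_eq_add_one_of_ne_zero hm.ne'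
  set c : ℕ → ℝ := fun j => (-1) ^ j * ((n.choose j : ℝ) * (((n + 1 : ℕ) : ℝ) * a + k) * a
      + (if j = 0 then 0 else (n.choose (j - 1) : ℝ)) * ((k : ℝ) * a + (n + 1 : ℕ)))
  have hS : ∀ x, Spoly (n + 1) k a x = ∑ j ∈ range (n + 2), c j * x ^ (2 * j) / (2 * j - 1) :=
    fun x => sum_congr rfl fun j _ => by simp only [c, Nat.add_sub_cancel]; ring
  have hc : ∑ j ∈ range (n + 2), c j * x ^ (2 * j)
      = (1 - x ^ 2) ^ n * (((n + 1 : ℕ) * a + k) * a - ((k : ℝ) * a + (n + 1 : ℕ)) * x ^ 2) := by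
    rw [← sum_range_neg_pow_mul_choose_add]
    refine sum_congr rfl fun j _ => ?_
    simp only [c, neg_pow (x ^ 2), ← pow_mul]
    ring
  simp only [hS, Nat.add_sub_cancel, ← hc]
  exact hasDerivAt_sum_pow_div_two_mul_sub_one_div _ c hx

lemma strictAntiOn_spoly_div (hm : 0 < m) (hA : ((m : ℝ) * a + k) * a < 0)
    (hB : 0 ≤ (k : ℝ) * a + m) : StrictAntiOn (fun x => Spoly m k a x / x) (Set.Ioo 0 1) := by
  refine strictAntiOn_of_deriv_neg (convex_Ioo 0 1)
    (fun x hx => (hasDerivAt_spoly_div hm hx.1.ne').continuousAt.continuousWithinAt) ?_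
  rw [interior_Ioo]
  intro x ⟨hx₀, hx₁⟩
  rw [(hasDerivAt_spoly_div hm hx₀.ne').deriv]
  have h : 0 < 1 - x ^ 2 := by nlinarith
  have h' : ((m : ℝ) * a + k) * a - ((k : ℝ) * a + m) * x ^ 2 < 0 := by nlinarith [sq_nonneg x]
  exact div_neg_of_neg_of_pos (mul_neg_of_pos_of_neg (pow_pos h _) h') (by positivity)

lemma spoly_pos_of_lt_root (hm : 0 < m) (hA : ((m : ℝ) * a + k) * a < 0)
    (hB : 0 ≤ (k : ℝ) * a + m) {b x : ℝ} (hb₁ : b < 1) (hb : Spoly m k a b = 0)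
    (hx₀ : 0 < x) (hxb : x < b) : 0 < Spoly m k a x := by
  have h := strictAntiOn_spoly_div hm hA hB ⟨hx₀, hxb.trans hb₁⟩ ⟨hx₀.trans hxb, hb₁⟩ hxb
  dsimp only at h
  rw [hb, zero_div] at h
  exact (div_pos_iff_of_pos_right hx₀).mp h

end

theorem stmt_17_general (m k : ℕ) (hkm : k < m)
    (a : ℝ) (ha₁ : -(k : ℝ) / (m : ℝ) < a) (ha₂ : a < 0)
    (hS : Spoly m k a a = 0) :
    ∀ ξ : ℝ, a < ξ → ξ < -a → 0 < Spoly m k a ξ := by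
  have hm : 0 < m := by omega
  have hmR : (0 : ℝ) < m := by exact_mod_cast hm
  have hkmR : (k : ℝ) < m := by exact_mod_cast hkm
  have hma : 0 < (m : ℝ) * a + k := by linarith [(div_lt_iff₀ hmR).mp ha₁]
  have ha : -1 < a := by nlinarith
  have hA : ((m : ℝ) * a + k) * a < 0 := mul_neg_of_pos_of_neg hma ha₂
  have hB : 0 ≤ (k : ℝ) * a + m := by
    nlinarith [mul_nonneg k.cast_nonneg (by linarith : (0 : ℝ) ≤ a + 1)]
  have hpos : ∀ x, 0 < x → x < -a → 0 < Spoly m k a x := fun x hx₀ hxa =>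
    spoly_pos_of_lt_root hm hA hB (by linarith) (by rwa [spoly_neg]) hx₀ hxa
  intro ξ hξ₁ hξ₂
  rcases lt_trichotomy ξ 0 with hξ | rfl | hξ
  · rw [← spoly_neg]
    exact hpos _ (by linarith) (by linarith)
  · rw [spoly_zero]
    linarith
  · exact hpos ξ hξ hξ₂

/-- if a ∈ (−k/m, 0) and S(a,a) = 0, then S(a,ξ) > 0 for all
ξ ∈ (a, −a). -/
theorem stmt_17 (m k : ℕ) (hk : 0 < k) (hkm : k < m)
    (a : ℝ) (ha₁ : -(k : ℝ) / (m : ℝ) < a) (ha₂ : a < 0)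
    (hS : Spoly m k a a = 0) :
    ∀ ξ : ℝ, a < ξ → ξ < -a → 0 < Spoly m k a ξ :=
  stmt_17_general m k hkm a ha₁ ha₂ hS
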